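/- Let X_{0:n−1} be drawn from an ergodic time-homogeneous Markov chain on the finite state space E = {1, …, K} with transition matrix P whose Dobrushin coefficient satisfies r < 1, started from its stationary distribution π. Let π̂_i(X_{0:n−1}) = (1/n)Σ_{k=0}^{n−1} 1(X_k = i) and fix p ≥ 1. Then for every ε > 0: P_π(‖π̂(X_{0:n−1}) − π‖_p ≥ E_π[‖π̂(X_{0:n−1}) − π‖_p] + ε) ≤ exp(−2^{1−2/p} n ε² (1−r)²). -/

import Mathlib

open Finset
open scoped ENNReal Classical BigOperators

/-- Probability mass of a trajectory `x : Fin n → Fin K` under the Markov chain with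
initial distribution `ρ` and transition matrix `Pm`:
`ρ (x 0) * ∏_{k=0}^{n-2} Pm (x k) (x (k+1))`. -/
noncomputable def chainMass {K n : ℕ} (ρ : Fin K → ℝ) (Pm : Fin K → Fin K → ℝ)
    (x : Fin n → Fin K) : ℝ :=
  (if h : 0 < n then ρ (x ⟨0, h⟩) else 1) *
    ∏ k : Fin (n - 1),
      Pm (x ⟨k.1, by have := k.2; omega⟩) (x ⟨k.1 + 1, by have := k.2; omega⟩)

/-- Probability of a set of trajectories under the Markov chain `(Pm, ρ)`. -/
noncomputable def chainProb {K n : ℕ} (ρ : Fin K → ℝ) (Pm : Fin K → Fin K → ℝ)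
    (s : Set (Fin n → Fin K)) : ℝ :=
  ∑ x : Fin n → Fin K, if x ∈ s then chainMass ρ Pm x else 0

/-- Expectation of `g` under the Markov chain `(Pm, ρ)`. -/
noncomputable def chainExp {K n : ℕ} (ρ : Fin K → ℝ) (Pm : Fin K → Fin K → ℝ)
    (g : (Fin n → Fin K) → ℝ) : ℝ :=
  ∑ x : Fin n → Fin K, chainMass ρ Pm x * g x

/-- The nonstationarity index `‖ϱ/π‖_{2,π} = (∑_i ϱ(i)²/π(i))^{1/2}`. -/
noncomputable def nsIndex {K : ℕ} (ϱ π : Fin K → ℝ) : ℝ :=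
  Real.sqrt (∑ i, ϱ i ^ 2 / π i)

/-- The empirical measure `π̂_i(x) = (1/n) ∑_{k} 1(x_k = i)`. -/
noncomputable def empMeas {K n : ℕ} (x : Fin n → Fin K) : Fin K → ℝ :=
  fun i => (∑ k : Fin n, if x k = i then (1 : ℝ) else 0) / n

/-- The `ℓ_p` norm on `ℝ^K` (for a real exponent `p ≥ 1`). -/
noncomputable def lpNorm {K : ℕ} (p : ℝ) (y : Fin K → ℝ) : ℝ :=
  (∑ i, |y i| ^ p) ^ (1 / p)

/-- The Dobrushin (contraction) coefficient `max_{i,j} (1/2) ∑_k |P_{ik} - P_{jk}|`. -/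
noncomputable def dobrushin {K : ℕ} (Pm : Fin K → Fin K → ℝ) : ℝ :=
  ⨆ i, ⨆ j, (1 / 2) * ∑ l, |Pm i l - Pm j l|


lemma hoeff_scalar {θ : ℝ} (h0 : 0 ≤ θ) (h1 : θ ≤ 1) (s : ℝ) :
    (1 - θ) + θ * Real.exp s ≤ Real.exp (θ * s + s ^ 2 / 8) := by
  set D : ℝ → ℝ := fun t => 1 - θ + θ * Real.exp t with hDdef
  have hD : ∀ t, 0 < D t := by
    intro t
    rcases eq_or_lt_of_le h0 with h | h
    · simp [hDdef, ← h]
    · have : 0 < θ * Real.exp t := mul_pos h (Real.exp_pos t)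
      have : 0 ≤ 1 - θ := by linarith
      simp only [hDdef]
      nlinarith [Real.exp_pos t]
  set f : ℝ → ℝ := fun t => θ * t + t ^ 2 / 8 - Real.log (D t) with hfdef
  set g : ℝ → ℝ := fun t => θ + t / 4 - θ * Real.exp t / D t with hgdef
  have hDder : ∀ t, HasDerivAt D (θ * Real.exp t) t := by
    intro t
    exact ((Real.hasDerivAt_exp t).const_mul θ).const_add (1 - θ)
  have hf' : ∀ t, HasDerivAt f (g t) t := by
    intro t
    have hlog : HasDerivAt (fun t => Real.log (D t)) (θ * Real.exp t / D t) t :=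
      (hDder t).log (hD t).ne'
    have h1' : HasDerivAt (fun t : ℝ => θ * t + t ^ 2 / 8) (θ + t * 2 / 8) t := by
      have := ((hasDerivAt_id t).const_mul θ).add
        (((hasDerivAt_pow 2 t)).div_const 8)
      exact this.congr_deriv (by norm_num; ring)
    have := h1'.sub hlog
    exact this.congr_deriv (by rw [hgdef]; ring)
  have hg' : ∀ t, HasDerivAt g
      (1 / 4 - (θ * Real.exp t * D t - θ * Real.exp t * (θ * Real.exp t)) / (D t) ^ 2) t := by
    intro t
    have hq : HasDerivAt (fun t => θ * Real.exp t / D t)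
        ((θ * Real.exp t * D t - θ * Real.exp t * (θ * Real.exp t)) / (D t) ^ 2) t :=
      ((Real.hasDerivAt_exp t).const_mul θ).div (hDder t) (hD t).ne'
    have h2 : HasDerivAt (fun t : ℝ => θ + t / 4) (1 / 4) t := by
      simpa using ((hasDerivAt_id t).div_const 4).const_add θ
    exact h2.sub hq
  have hgderiv_nonneg : ∀ t,
      0 ≤ 1 / 4 - (θ * Real.exp t * D t - θ * Real.exp t * (θ * Real.exp t)) / (D t) ^ 2 := by
    intro t
    have hDt := hD t
    rw [sub_nonneg, div_le_iff₀ (by positivity)]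
    have : θ * Real.exp t * D t - θ * Real.exp t * (θ * Real.exp t)
        = (θ * Real.exp t) * (1 - θ) := by
      simp only [hDdef]; ring
    rw [this]
    have hsq : 0 ≤ ((1 - θ) - θ * Real.exp t) ^ 2 := sq_nonneg _
    have : (D t) ^ 2 = ((1 - θ) + θ * Real.exp t) ^ 2 := rfl
    nlinarith
  have hgmono : Monotone g :=
    monotone_of_deriv_nonneg (fun t => (hg' t).differentiableAt)
      (fun t => by rw [(hg' t).deriv]; exact hgderiv_nonneg t)
  have hg0 : g 0 = 0 := by
    simp [hgdef, hDdef, Real.exp_zero]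
  have hf0 : f 0 = 0 := by
    simp [hfdef, hDdef, Real.exp_zero]
  have hfdiff : ∀ t, DifferentiableAt ℝ f t := fun t => (hf' t).differentiableAt
  have hfcont : Continuous f := by
    exact (Differentiable.continuous fun t => hfdiff t)
  have hfge : ∀ t, 0 ≤ f t := by
    intro t
    rcases le_or_gt 0 t with ht | ht
    · have hmono : MonotoneOn f (Set.Ici (0 : ℝ)) := by
        apply monotoneOn_of_deriv_nonneg (convex_Ici 0) (hfcont.continuousOn)
          (fun x hx => (hfdiff x).differentiableWithinAt)
        intro x hx
        rw [(hf' x).deriv]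
        rw [interior_Ici] at hx
        have := hgmono (le_of_lt hx)
        rw [hg0] at this; linarith
      have := hmono (le_refl (0:ℝ) : (0:ℝ) ∈ Set.Ici (0:ℝ)) (ht : t ∈ Set.Ici (0:ℝ)) ht
      rw [hf0] at this; exact this
    · have hanti : AntitoneOn f (Set.Iic (0 : ℝ)) := by
        apply antitoneOn_of_deriv_nonpos (convex_Iic 0) (hfcont.continuousOn)
          (fun x hx => (hfdiff x).differentiableWithinAt)
        intro x hx
        rw [(hf' x).deriv]
        rw [interior_Iic] at hx
        have := hgmono (le_of_lt hx)
        rw [hg0] at this; linarith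
      have := hanti (le_of_lt ht : t ∈ Set.Iic (0:ℝ)) (le_refl (0:ℝ) : (0:ℝ) ∈ Set.Iic (0:ℝ)) (le_of_lt ht)
      rw [hf0] at this; exact this
  have := hfge s
  have hlog : Real.log (D s) ≤ θ * s + s ^ 2 / 8 := by
    simp only [hfdef] at this; linarith
  calc (1 - θ) + θ * Real.exp s = D s := rfl
    _ ≤ Real.exp (θ * s + s ^ 2 / 8) := by
        rw [← Real.exp_log (hD s)]
        exact Real.exp_le_exp.2 hlog

lemma hoeff_finite' {K : ℕ} (hK : 0 < K) (q v : Fin K → ℝ) (hq : ∀ y, 0 ≤ q y)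
    (hq1 : ∑ y, q y = 1) (d : ℝ) (hosc : ∀ y y', v y - v y' ≤ d) (t : ℝ) :
    ∑ y, q y * Real.exp (t * v y) ≤ Real.exp (t * (∑ y, q y * v y) + t ^ 2 * d ^ 2 / 8) := by
  haveI : NeZero K := ⟨hK.ne'⟩
  obtain ⟨ymin, -, hmin⟩ := Finset.exists_min_image (univ : Finset (Fin K)) v ⟨0, mem_univ 0⟩
  obtain ⟨ymax, -, hmax⟩ := Finset.exists_max_image (univ : Finset (Fin K)) v ⟨0, mem_univ 0⟩
  set A := v ymin with hA
  set B := v ymax with hB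
  have hAB : A ≤ B := hmin ymax (mem_univ _)
  have hdB : B - A ≤ d := hosc ymax ymin
  have hd0 : 0 ≤ d := le_trans (by linarith) hdB
  set μ0 := ∑ y, q y * v y with hμ0
  have hμA : A ≤ μ0 := by
    calc A = ∑ y, q y * A := by rw [← Finset.sum_mul, hq1, one_mul]
    _ ≤ μ0 := Finset.sum_le_sum fun y _ => mul_le_mul_of_nonneg_left (hmin y (mem_univ _)) (hq y)
  have hμB : μ0 ≤ B := by
    calc μ0 ≤ ∑ y, q y * B :=
        Finset.sum_le_sum fun y _ => mul_le_mul_of_nonneg_left (hmax y (mem_univ _)) (hq y)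
    _ = B := by rw [← Finset.sum_mul, hq1, one_mul]
  have hsB : (B - A) ^ 2 ≤ d ^ 2 := by nlinarith
  rcases eq_or_lt_of_le hAB with heq | hlt
  · -- degenerate: all values equal
    have hv : ∀ y, v y = A := fun y =>
      le_antisymm (by rw [heq]; exact hmax y (mem_univ _)) (hmin y (mem_univ _))
    have hμ : μ0 = A := by
      rw [hμ0]; simp_rw [hv]; rw [← Finset.sum_mul, hq1, one_mul]
    have hL : ∑ y, q y * Real.exp (t * v y) = Real.exp (t * A) := by
      simp_rw [hv]; rw [← Finset.sum_mul, hq1, one_mul]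
    rw [hL, hμ]
    apply Real.exp_le_exp.2
    nlinarith [sq_nonneg t, sq_nonneg d, mul_nonneg (sq_nonneg t) (sq_nonneg d)]
  · set θ := (μ0 - A) / (B - A) with hθ
    have hBA : 0 < B - A := by linarith
    have hθ0 : 0 ≤ θ := div_nonneg (by linarith) hBA.le
    have hθ1 : θ ≤ 1 := (div_le_one hBA).2 (by linarith)
    set s := t * (B - A) with hs
    set eA := Real.exp (t * A) with heA
    set eB := Real.exp (t * B) with heB
    have step1 : ∀ y, Real.exp (t * v y) ≤ ((B - v y) * eA + (v y - A) * eB) / (B - A) := by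
      intro y
      have hl1 : (0:ℝ) ≤ (B - v y) / (B - A) := div_nonneg (by linarith [hmax y (mem_univ y)]) hBA.le
      have hl2 : (0:ℝ) ≤ (v y - A) / (B - A) := div_nonneg (by linarith [hmin y (mem_univ y)]) hBA.le
      have hl12 : (B - v y) / (B - A) + (v y - A) / (B - A) = 1 := by
        field_simp
        ring
      have hc := convexOn_exp.2 (Set.mem_univ (t * A)) (Set.mem_univ (t * B)) hl1 hl2 hl12
      simp only [smul_eq_mul] at hc
      have harg : (B - v y) / (B - A) * (t * A) + (v y - A) / (B - A) * (t * B) = t * v y := by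
        field_simp; ring
      rw [harg] at hc
      calc Real.exp (t * v y) ≤ (B - v y) / (B - A) * eA + (v y - A) / (B - A) * eB := hc
        _ = ((B - v y) * eA + (v y - A) * eB) / (B - A) := by ring
    have step2 : ∑ y, q y * Real.exp (t * v y)
        ≤ ((B - μ0) * eA + (μ0 - A) * eB) / (B - A) := by
      calc ∑ y, q y * Real.exp (t * v y)
          ≤ ∑ y, q y * (((B - v y) * eA + (v y - A) * eB) / (B - A)) :=
            Finset.sum_le_sum fun y _ => mul_le_mul_of_nonneg_left (step1 y) (hq y)
        _ = ((B - μ0) * eA + (μ0 - A) * eB) / (B - A) := by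
            simp_rw [← mul_div_assoc]
            rw [← Finset.sum_div]
            congr 1
            have expand : ∀ y, q y * ((B - v y) * eA + (v y - A) * eB)
                = (q y * B - q y * v y) * eA + (q y * v y - q y * A) * eB := fun y => by ring
            simp_rw [expand]
            rw [Finset.sum_add_distrib, ← Finset.sum_mul, ← Finset.sum_mul,
              Finset.sum_sub_distrib, Finset.sum_sub_distrib, ← Finset.sum_mul,
              ← Finset.sum_mul, hq1, one_mul, one_mul, ← hμ0]
    have step3 : ((B - μ0) * eA + (μ0 - A) * eB) / (B - A)
        ≤ Real.exp (t * μ0 + t ^ 2 * d ^ 2 / 8) := by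
      have hsc := hoeff_scalar hθ0 hθ1 s
      have hkey : ((B - μ0) * eA + (μ0 - A) * eB) / (B - A)
          = ((1 - θ) + θ * Real.exp s) * eA := by
        have hesB : Real.exp s * eA = eB := by
          rw [heA, heB, ← Real.exp_add]; congr 1; rw [hs]; ring
        rw [← hesB]
        rw [hθ]
        field_simp
        ring
      rw [hkey]
      have h2 : ((1 - θ) + θ * Real.exp s) * eA ≤ Real.exp (θ * s + s ^ 2 / 8) * eA :=
        mul_le_mul_of_nonneg_right hsc (Real.exp_nonneg _)
      apply le_trans h2
      rw [heA, ← Real.exp_add]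
      apply Real.exp_le_exp.2
      have hθs : θ * s = t * (μ0 - A) := by
        rw [hθ, hs]; field_simp
      have hs2 : s ^ 2 = t ^ 2 * (B - A) ^ 2 := by rw [hs]; ring
      have : t ^ 2 * (B - A) ^ 2 ≤ t ^ 2 * d ^ 2 :=
        mul_le_mul_of_nonneg_left hsB (sq_nonneg t)
      rw [hθs, hs2]
      ring_nf
      nlinarith
    exact le_trans step2 step3

noncomputable def phi {K : ℕ} (Pm : Fin K → Fin K → ℝ) :
    (m : ℕ) → Fin K → ((Fin m → Fin K) → ℝ) → ℝ
  | 0, _, g => g (fun i => i.elim0)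
  | m + 1, a, g => ∑ b, Pm a b * phi Pm m b (fun s => g (Fin.cons b s))

noncomputable def psi {K : ℕ} (Pm : Fin K → Fin K → ℝ) (m : ℕ) (a : Fin K)
    (h : (Fin (m + 1) → Fin K) → ℝ) : ℝ :=
  phi Pm m a (fun s => h (Fin.cons a s))

lemma psi_succ {K : ℕ} (Pm : Fin K → Fin K → ℝ) (m : ℕ) (a : Fin K)
    (h : (Fin (m + 2) → Fin K) → ℝ) :
    psi Pm (m + 1) a h = ∑ b, Pm a b * psi Pm m b (fun z => h (Fin.cons a z)) := rfl

section philemmas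
variable {K : ℕ} {Pm : Fin K → Fin K → ℝ}
  (hPnn : ∀ i j, 0 ≤ Pm i j) (hProw : ∀ i, ∑ j, Pm i j = 1)
include hPnn hProw
set_option linter.unusedSectionVars false

lemma phi_const (c : ℝ) : ∀ (m : ℕ) (a : Fin K), phi Pm m a (fun _ => c) = c := by
  intro m
  induction m with
  | zero => intro a; rfl
  | succ m ih =>
    intro a
    show ∑ b, Pm a b * phi Pm m b (fun _ => c) = c
    simp_rw [ih]
    rw [← Finset.sum_mul, hProw, one_mul]

lemma phi_le : ∀ (m : ℕ) (a : Fin K) (g g' : (Fin m → Fin K) → ℝ),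
    (∀ s, g s ≤ g' s) → phi Pm m a g ≤ phi Pm m a g' := by
  intro m
  induction m with
  | zero => intro a g g' hle; exact hle _
  | succ m ih =>
    intro a g g' hle
    exact Finset.sum_le_sum fun b _ =>
      mul_le_mul_of_nonneg_left (ih b _ _ fun s => hle _) (hPnn a b)

lemma phi_sub : ∀ (m : ℕ) (a : Fin K) (g g' : (Fin m → Fin K) → ℝ),
    phi Pm m a (fun s => g s - g' s) = phi Pm m a g - phi Pm m a g' := by
  intro m
  induction m with
  | zero => intro a g g'; rfl
  | succ m ih =>
    intro a g g'
    show ∑ b, Pm a b * phi Pm m b (fun s => g (Fin.cons b s) - g' (Fin.cons b s)) = _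
    simp_rw [ih, mul_sub]
    rw [Finset.sum_sub_distrib]
    rfl

lemma phi_abs_sub (m : ℕ) (a : Fin K) (g g' : (Fin m → Fin K) → ℝ) (c : ℝ)
    (hbd : ∀ s, |g s - g' s| ≤ c) :
    |phi Pm m a g - phi Pm m a g'| ≤ c := by
  rw [← phi_sub hPnn hProw]
  rw [abs_le]
  constructor
  · have := phi_le hPnn hProw m a (fun _ => -c) (fun s => g s - g' s)
      (fun s => (abs_le.1 (hbd s)).1)
    rwa [phi_const hPnn hProw (-c) m a] at this
  · have := phi_le hPnn hProw m a (fun s => g s - g' s) (fun _ => c)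
      (fun s => (abs_le.1 (hbd s)).2)
    rwa [phi_const hPnn hProw c m a] at this

end philemmas

lemma tv_bound {K : ℕ} (hK : 0 < K) (u φ : Fin K → ℝ) (hu : ∑ y, u y = 0) (d : ℝ)
    (hosc : ∀ y y', |φ y - φ y'| ≤ d) :
    |∑ y, u y * φ y| ≤ (∑ y, |u y|) * (d / 2) := by
  haveI : NeZero K := ⟨hK.ne'⟩
  obtain ⟨ymin, -, hmin⟩ := Finset.exists_min_image (univ : Finset (Fin K)) φ ⟨0, mem_univ 0⟩
  obtain ⟨ymax, -, hmax⟩ := Finset.exists_max_image (univ : Finset (Fin K)) φ ⟨0, mem_univ 0⟩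
  set M := (φ ymax + φ ymin) / 2 with hM
  have hge : (0:ℝ) ≤ φ ymax - φ ymin := by linarith [hmin ymax (mem_univ ymax)]
  have hosc' : φ ymax - φ ymin ≤ d := by
    have := hosc ymax ymin
    rwa [abs_of_nonneg hge] at this
  have hcen : ∀ y, |φ y - M| ≤ d / 2 := by
    intro y
    rw [abs_le]
    constructor
    · have := hmin y (mem_univ y); rw [hM]; linarith
    · have := hmax y (mem_univ y); rw [hM]; linarith
  have key : ∑ y, u y * φ y = ∑ y, u y * (φ y - M) := by
    simp_rw [mul_sub]
    rw [Finset.sum_sub_distrib, ← Finset.sum_mul, hu, zero_mul, sub_zero]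
  rw [key]
  calc |∑ y, u y * (φ y - M)| ≤ ∑ y, |u y * (φ y - M)| := Finset.abs_sum_le_sum_abs _ _
    _ ≤ ∑ y, |u y| * (d / 2) := by
        apply Finset.sum_le_sum
        intro y _
        rw [abs_mul]
        exact mul_le_mul_of_nonneg_left (hcen y) (abs_nonneg _)
    _ = (∑ y, |u y|) * (d / 2) := by rw [Finset.sum_mul]

lemma dob_le {K : ℕ} (Pm : Fin K → Fin K → ℝ) (a b : Fin K) :
    ∑ l, |Pm a l - Pm b l| ≤ 2 * dobrushin Pm := by
  have hb1 : BddAbove (Set.range fun j => (1 / 2 : ℝ) * ∑ l, |Pm a l - Pm j l|) :=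
    (Set.finite_range _).bddAbove
  have hb2 : BddAbove (Set.range fun i => ⨆ j, (1 / 2 : ℝ) * ∑ l, |Pm i l - Pm j l|) :=
    (Set.finite_range _).bddAbove
  have h1 : (1 / 2 : ℝ) * ∑ l, |Pm a l - Pm b l| ≤ ⨆ j, (1 / 2 : ℝ) * ∑ l, |Pm a l - Pm j l| :=
    le_ciSup hb1 b
  have h2 : (⨆ j, (1 / 2 : ℝ) * ∑ l, |Pm a l - Pm j l|) ≤ dobrushin Pm := le_ciSup hb2 a
  have := h1.trans h2
  linarith

lemma dob_nonneg {K : ℕ} (hK : 0 < K) (Pm : Fin K → Fin K → ℝ) : 0 ≤ dobrushin Pm := by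
  haveI : NeZero K := ⟨hK.ne'⟩
  have := dob_le Pm 0 0
  have h0 : (0:ℝ) ≤ ∑ l, |Pm 0 l - Pm 0 l| := Finset.sum_nonneg fun l _ => abs_nonneg _
  linarith

section osc
variable {K : ℕ} {Pm : Fin K → Fin K → ℝ}
  (hPnn : ∀ i j, 0 ≤ Pm i j) (hProw : ∀ i, ∑ j, Pm i j = 1)
  {r c : ℝ} (hK : 0 < K) (hr0 : 0 ≤ r) (hr1 : r < 1) (hc : 0 ≤ c)
  (hdob : ∀ a b, ∑ l, |Pm a l - Pm b l| ≤ 2 * r)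
set_option linter.unusedSectionVars false
include hPnn hProw hK hr0 hr1 hc hdob

lemma psi_osc : ∀ (m : ℕ) (h : (Fin (m + 1) → Fin K) → ℝ),
    (∀ (x x' : Fin (m + 1) → Fin K) (j : Fin (m + 1)),
      (∀ i, i ≠ j → x i = x' i) → |h x - h x'| ≤ c) →
    ∀ (a b : Fin K), |psi Pm m a h - psi Pm m b h| ≤ c / (1 - r) := by
  intro m
  induction m with
  | zero =>
    intro h hbd a b
    have h1 : |h (Fin.cons a fun i => i.elim0) - h (Fin.cons b fun i => i.elim0)| ≤ c := by
      apply hbd _ _ 0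
      intro i hi
      fin_cases i
      exact absurd rfl hi
    have hle : c ≤ c / (1 - r) := by
      rw [le_div_iff₀ (by linarith)]
      nlinarith
    exact le_trans h1 hle
  | succ m ih =>
    intro h hbd a b
    rw [psi_succ, psi_succ]
    set ha : (Fin (m + 1) → Fin K) → ℝ := fun z => h (Fin.cons a z) with hha
    set hb : (Fin (m + 1) → Fin K) → ℝ := fun z => h (Fin.cons b z) with hhb
    have key : ∀ y, Pm a y * psi Pm m y ha - Pm b y * psi Pm m y hb
        = Pm a y * (psi Pm m y ha - psi Pm m y hb) + (Pm a y - Pm b y) * psi Pm m y hb :=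
      fun y => by ring
    rw [← Finset.sum_sub_distrib]
    simp_rw [key]
    rw [Finset.sum_add_distrib]
    have hbd_cons : ∀ (w : Fin K) (z z' : Fin (m + 1) → Fin K) (j : Fin (m + 1)),
        (∀ i, i ≠ j → z i = z' i) → |h (Fin.cons w z) - h (Fin.cons w z')| ≤ c := by
      intro w z z' j hzz'
      apply hbd _ _ j.succ
      intro i hi
      rcases Fin.eq_zero_or_eq_succ i with rfl | ⟨i', rfl⟩
      · simp
      · simp only [Fin.cons_succ]
        exact hzz' i' fun e => hi (by rw [e])
    have t1 : |∑ y, Pm a y * (psi Pm m y ha - psi Pm m y hb)| ≤ c := by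
      calc |∑ y, Pm a y * (psi Pm m y ha - psi Pm m y hb)|
          ≤ ∑ y, |Pm a y * (psi Pm m y ha - psi Pm m y hb)| := Finset.abs_sum_le_sum_abs _ _
        _ ≤ ∑ y, Pm a y * c := by
            apply Finset.sum_le_sum
            intro y _
            rw [abs_mul, abs_of_nonneg (hPnn a y)]
            apply mul_le_mul_of_nonneg_left _ (hPnn a y)
            show |phi Pm m y (fun s => ha (Fin.cons y s)) -
                phi Pm m y (fun s => hb (Fin.cons y s))| ≤ c
            apply phi_abs_sub hPnn hProw
            intro s
            apply hbd _ _ 0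
            intro i hi
            rcases Fin.eq_zero_or_eq_succ i with rfl | ⟨i', rfl⟩
            · exact absurd rfl hi
            · simp only [Fin.cons_succ]
        _ = c := by rw [← Finset.sum_mul, hProw, one_mul]
    have t2 : |∑ y, (Pm a y - Pm b y) * psi Pm m y hb| ≤ r * (c / (1 - r)) := by
      have hu : ∑ y, (Pm a y - Pm b y) = 0 := by
        rw [Finset.sum_sub_distrib, hProw, hProw, sub_self]
      have hoscb : ∀ y y', |psi Pm m y hb - psi Pm m y' hb| ≤ c / (1 - r) := by
        intro y y'
        exact ih hb (hbd_cons b) y y'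
      have := tv_bound hK (fun y => Pm a y - Pm b y) (fun y => psi Pm m y hb) hu
        (c / (1 - r)) hoscb
      have hd2 : (0:ℝ) ≤ c / (1 - r) / 2 :=
        div_nonneg (div_nonneg hc (by linarith)) (by norm_num)
      calc |∑ y, (Pm a y - Pm b y) * psi Pm m y hb|
          ≤ (∑ y, |Pm a y - Pm b y|) * (c / (1 - r) / 2) := this
        _ ≤ 2 * r * (c / (1 - r) / 2) := mul_le_mul_of_nonneg_right (hdob a b) hd2
        _ = r * (c / (1 - r)) := by ring
    have heq : c + r * (c / (1 - r)) = c / (1 - r) := by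
      have h1r : (1:ℝ) - r ≠ 0 := by linarith
      field_simp
      ring
    calc |∑ y, Pm a y * (psi Pm m y ha - psi Pm m y hb)
          + ∑ y, (Pm a y - Pm b y) * psi Pm m y hb|
        ≤ |∑ y, Pm a y * (psi Pm m y ha - psi Pm m y hb)|
          + |∑ y, (Pm a y - Pm b y) * psi Pm m y hb| := abs_add_le _ _
      _ ≤ c + r * (c / (1 - r)) := add_le_add t1 t2
      _ = c / (1 - r) := heq

end osc


section mgf
variable {K : ℕ} {Pm : Fin K → Fin K → ℝ}
  (hPnn : ∀ i j, 0 ≤ Pm i j) (hProw : ∀ i, ∑ j, Pm i j = 1)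
  {r c : ℝ} (hK : 0 < K) (hr0 : 0 ≤ r) (hr1 : r < 1) (hc : 0 ≤ c)
  (hdob : ∀ a b, ∑ l, |Pm a l - Pm b l| ≤ 2 * r)
set_option linter.unusedSectionVars false
include hPnn hProw hK hr0 hr1 hc hdob

lemma psi_mgf (t : ℝ) : ∀ (m : ℕ) (h : (Fin (m + 1) → Fin K) → ℝ),
    (∀ (x x' : Fin (m + 1) → Fin K) (j : Fin (m + 1)),
      (∀ i, i ≠ j → x i = x' i) → |h x - h x'| ≤ c) →
    ∀ (a : Fin K), psi Pm m a (fun z => Real.exp (t * h z))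
      ≤ Real.exp (t * psi Pm m a h + m * (t ^ 2 * (c / (1 - r)) ^ 2 / 8)) := by
  intro m
  induction m with
  | zero =>
    intro h hbd a
    show Real.exp (t * h (Fin.cons a fun i => i.elim0))
      ≤ Real.exp (t * h (Fin.cons a fun i => i.elim0) + ↑(0:ℕ) * (t ^ 2 * (c / (1 - r)) ^ 2 / 8))
    rw [Nat.cast_zero, zero_mul, add_zero]
  | succ m ih =>
    intro h hbd a
    have hsucc1 : psi Pm (m + 1) a (fun z => Real.exp (t * h z))
        = ∑ b, Pm a b * psi Pm m b (fun z => Real.exp (t * h (Fin.cons a z))) := rfl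
    have hsucc2 : psi Pm (m + 1) a h
        = ∑ b, Pm a b * psi Pm m b (fun z => h (Fin.cons a z)) := rfl
    rw [hsucc1, hsucc2]
    have hbd_cons : ∀ (z z' : Fin (m + 1) → Fin K) (j : Fin (m + 1)),
        (∀ i, i ≠ j → z i = z' i) →
        |h (Fin.cons a z) - h (Fin.cons a z')| ≤ c := by
      intro z z' j hzz'
      apply hbd _ _ j.succ
      intro i hi
      rcases Fin.eq_zero_or_eq_succ i with rfl | ⟨i', rfl⟩
      · simp
      · simp only [Fin.cons_succ]
        exact hzz' i' fun e => hi (by rw [e])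
    set E := t ^ 2 * (c / (1 - r)) ^ 2 / 8 with hE
    have hE0 : 0 ≤ E := by
      rw [hE]
      positivity
    calc ∑ b, Pm a b * psi Pm m b (fun z => Real.exp (t * h (Fin.cons a z)))
        ≤ ∑ b, Pm a b * Real.exp (t * psi Pm m b (fun z => h (Fin.cons a z)) + m * E) := by
          apply Finset.sum_le_sum
          intro b _
          exact mul_le_mul_of_nonneg_left
            (ih (fun z => h (Fin.cons a z)) hbd_cons b) (hPnn a b)
      _ = Real.exp (m * E) *
            ∑ b, Pm a b * Real.exp (t * psi Pm m b (fun z => h (Fin.cons a z))) := by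
          rw [Finset.mul_sum]
          apply Finset.sum_congr rfl
          intro b _
          rw [Real.exp_add]
          ring
      _ ≤ Real.exp (m * E) *
            Real.exp (t * (∑ b, Pm a b * psi Pm m b (fun z => h (Fin.cons a z)))
              + t ^ 2 * (c / (1 - r)) ^ 2 / 8) := by
          apply mul_le_mul_of_nonneg_left _ (Real.exp_nonneg _)
          apply hoeff_finite' hK (Pm a) (fun b => psi Pm m b (fun z => h (Fin.cons a z)))
            (hPnn a) (hProw a)
          intro y y'
          have := psi_osc hPnn hProw hK hr0 hr1 hc hdob m
            (fun z => h (Fin.cons a z)) hbd_cons y y'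
          have h2 := (abs_le.1 this).2
          exact h2
      _ = Real.exp (t * (∑ b, Pm a b * psi Pm m b (fun z => h (Fin.cons a z)))
            + (↑(m + 1)) * E) := by
          rw [← Real.exp_add]
          congr 1
          push_cast
          rw [hE]
          ring
end mgf

lemma cons_mk_succ {K m : ℕ} (a : Fin K) (y : Fin (m + 1) → Fin K) (k : ℕ)
    (hk : k + 1 < m + 2) :
    (Fin.cons a y : Fin (m + 2) → Fin K) ⟨k + 1, hk⟩ = y ⟨k, Nat.succ_lt_succ_iff.mp hk⟩ := by
  have h : (⟨k + 1, hk⟩ : Fin (m + 2)) = Fin.succ ⟨k, Nat.succ_lt_succ_iff.mp hk⟩ := rfl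
  rw [h, Fin.cons_succ]

lemma cons_mk_zero {K m : ℕ} (a : Fin K) (y : Fin (m + 1) → Fin K) (h : 0 < m + 2) :
    (Fin.cons a y : Fin (m + 2) → Fin K) ⟨0, h⟩ = a := rfl

lemma chainMass_expand {K m : ℕ} (ρ : Fin K → ℝ) (Pm : Fin K → Fin K → ℝ)
    (x : Fin (m + 1) → Fin K) :
    chainMass ρ Pm x = ρ (x 0) *
      ∏ k : Fin m, Pm (x ⟨k.1, by have := k.2; omega⟩) (x ⟨k.1 + 1, by have := k.2; omega⟩) := by
  unfold chainMass
  rw [dif_pos (Nat.succ_pos m)]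
  rfl

lemma chainMass_one {K : ℕ} (ρ : Fin K → ℝ) (Pm : Fin K → Fin K → ℝ) (x : Fin 1 → Fin K) :
    chainMass ρ Pm x = ρ (x 0) := by
  rw [chainMass_expand]
  rw [Fin.prod_univ_zero, mul_one]

lemma chainMass_cons {K m : ℕ} (ρ : Fin K → ℝ) (Pm : Fin K → Fin K → ℝ) (a : Fin K)
    (y : Fin (m + 1) → Fin K) :
    chainMass ρ Pm (Fin.cons a y) = ρ a * chainMass (Pm a) Pm y := by
  rw [chainMass_expand, chainMass_expand]
  rw [Fin.prod_univ_succ]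
  simp only [Fin.val_zero, Fin.val_succ, cons_mk_succ, cons_mk_zero, Fin.mk_zero, Fin.cons_zero]

lemma bridge {K : ℕ} (Pm : Fin K → Fin K → ℝ) :
    ∀ (m : ℕ) (ρ : Fin K → ℝ) (g : (Fin (m + 1) → Fin K) → ℝ),
    (∑ x : Fin (m + 1) → Fin K, chainMass ρ Pm x * g x) = ∑ a, ρ a * psi Pm m a g := by
  intro m
  induction m with
  | zero =>
    intro ρ g
    rw [← Equiv.sum_comp (Equiv.funUnique (Fin 1) (Fin K)).symm
      (fun x => chainMass ρ Pm x * g x)]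
    apply Finset.sum_congr rfl
    intro a _
    have hx : ((Equiv.funUnique (Fin 1) (Fin K)).symm a) = Fin.cons a (fun i => i.elim0) := by
      funext i
      fin_cases i
      rfl
    rw [hx, chainMass_one]
    rfl
  | succ m ih =>
    intro ρ g
    rw [← Equiv.sum_comp (Fin.consEquiv (fun _ : Fin (m + 2) => Fin K))
      (fun x => chainMass ρ Pm x * g x)]
    rw [Fintype.sum_prod_type]
    have hstep : ∀ a : Fin K,
        (∑ y : Fin (m + 1) → Fin K,
          chainMass ρ Pm (Fin.consEquiv (fun _ : Fin (m + 2) => Fin K) (a, y)) *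
            g (Fin.consEquiv (fun _ : Fin (m + 2) => Fin K) (a, y)))
          = ρ a * psi Pm (m + 1) a g := by
      intro a
      have hce : ∀ y : Fin (m + 1) → Fin K,
          Fin.consEquiv (fun _ : Fin (m + 2) => Fin K) (a, y) = Fin.cons a y := fun y => rfl
      simp_rw [hce, chainMass_cons, mul_assoc]
      rw [← Finset.mul_sum]
      congr 1
      rw [ih (Pm a) (fun y => g (Fin.cons a y)), psi_succ]
    exact Finset.sum_congr rfl fun a _ => hstep a

lemma lpNorm_sub_le {K : ℕ} (p : ℝ) (hp : 1 ≤ p) (u w : Fin K → ℝ) :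
    |lpNorm p u - lpNorm p w| ≤ lpNorm p (fun i => u i - w i) := by
  have key : ∀ u w : Fin K → ℝ, lpNorm p u ≤ lpNorm p w + lpNorm p (fun i => u i - w i) := by
    intro u w
    have h := Real.Lp_add_le (univ : Finset (Fin K)) w (fun i => u i - w i) hp
    have heq : ∀ i, w i + (u i - w i) = u i := fun i => by ring
    simp_rw [heq] at h
    exact h
  have hsymm : lpNorm p (fun i => w i - u i) = lpNorm p (fun i => u i - w i) := by
    unfold lpNorm
    congr 1
    exact Finset.sum_congr rfl fun i _ => by rw [abs_sub_comm]
  have h1 := key u w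
  have h2 := key w u
  rw [hsymm] at h2
  rw [abs_sub_le_iff]
  constructor <;> linarith

lemma lpNorm_emp_diff {K n : ℕ} (hn : 0 < n) (p : ℝ) (hp : 1 ≤ p)
    (x x' : Fin n → Fin K) (j : Fin n) (hxx' : ∀ i, i ≠ j → x i = x' i) :
    lpNorm p (fun i => empMeas x i - empMeas x' i) ≤ (2 : ℝ) ^ (1 / p) / n := by
  have hp0 : 0 < p := lt_of_lt_of_le one_pos hp
  have hn0 : (0:ℝ) < n := by exact_mod_cast hn
  have hD : ∀ i, empMeas x i - empMeas x' i
      = ((if x j = i then (1:ℝ) else 0) - (if x' j = i then (1:ℝ) else 0)) / n := by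
    intro i
    unfold empMeas
    rw [div_sub_div_same]
    congr 1
    rw [← Finset.sum_sub_distrib]
    rw [Finset.sum_eq_single j]
    · intro k _ hk
      rw [hxx' k hk, sub_self]
    · intro hj
      exact absurd (mem_univ j) hj
  have hbound : ∀ i, |empMeas x i - empMeas x' i| ^ p
      ≤ (if i = x j ∨ i = x' j then ((1:ℝ) / n) ^ p else 0) := by
    intro i
    by_cases hcase : i = x j ∨ i = x' j
    · rw [if_pos hcase]
      apply Real.rpow_le_rpow (abs_nonneg _) _ hp0.le
      rw [hD i, abs_div, abs_of_nonneg hn0.le]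
      have habs : |(if x j = i then (1:ℝ) else 0) - (if x' j = i then (1:ℝ) else 0)| ≤ 1 := by
        split_ifs <;> norm_num
      gcongr
    · rw [if_neg hcase]
      push_neg at hcase
      have hz : empMeas x i - empMeas x' i = 0 := by
        rw [hD i, if_neg (fun h => hcase.1 h.symm), if_neg (fun h => hcase.2 h.symm),
          sub_self, zero_div]
      rw [hz, abs_zero, Real.zero_rpow hp0.ne']
  have hsum : ∑ i, |empMeas x i - empMeas x' i| ^ p ≤ 2 * ((1:ℝ) / n) ^ p := by
    calc ∑ i, |empMeas x i - empMeas x' i| ^ p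
        ≤ ∑ i, (if i = x j ∨ i = x' j then ((1:ℝ) / n) ^ p else 0) :=
          Finset.sum_le_sum fun i _ => hbound i
      _ ≤ 2 * ((1:ℝ) / n) ^ p := by
          rw [Finset.sum_ite, Finset.sum_const, Finset.sum_const_zero, add_zero]
          have hsub : Finset.filter (fun i => i = x j ∨ i = x' j) univ
              ⊆ ({x j, x' j} : Finset (Fin K)) := by
            intro i hi
            simp only [Finset.mem_filter, Finset.mem_univ, true_and] at hi
            simp only [Finset.mem_insert, Finset.mem_singleton]
            exact hi
          have hcard : (Finset.filter (fun i => i = x j ∨ i = x' j) univ).card ≤ 2 := by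
            have := Finset.card_le_card hsub
            have h2 : ({x j, x' j} : Finset (Fin K)).card ≤ 2 :=
              (Finset.card_insert_le _ _).trans (by simp)
            omega
          rw [nsmul_eq_mul]
          apply mul_le_mul_of_nonneg_right _ (by positivity)
          exact_mod_cast hcard
  have h1p : (0:ℝ) ≤ 1 / p := by positivity
  calc lpNorm p (fun i => empMeas x i - empMeas x' i)
      ≤ (2 * ((1:ℝ) / n) ^ p) ^ (1 / p) := by
        unfold lpNorm
        exact Real.rpow_le_rpow (Finset.sum_nonneg fun i _ =>
          Real.rpow_nonneg (abs_nonneg _) p) hsum h1p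
    _ = (2 : ℝ) ^ (1 / p) / n := by
        rw [Real.mul_rpow (by norm_num) (Real.rpow_nonneg (by positivity) _),
          ← Real.rpow_mul (by positivity : (0:ℝ) ≤ 1 / (n:ℝ)),
          mul_one_div_cancel hp0.ne', Real.rpow_one, mul_one_div]

lemma chainMass_nonneg {K n : ℕ} (ρ : Fin K → ℝ) (Pm : Fin K → Fin K → ℝ)
    (hρ : ∀ i, 0 ≤ ρ i) (hPnn : ∀ i j, 0 ≤ Pm i j) (x : Fin n → Fin K) :
    0 ≤ chainMass ρ Pm x := by
  unfold chainMass
  apply mul_nonneg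
  · split
    · exact hρ _
    · exact zero_le_one
  · exact Finset.prod_nonneg fun k _ => hPnn _ _

theorem stmt12 {K n : ℕ} (hK : 0 < K) (hn : 0 < n)
    (Pm : Fin K → Fin K → ℝ)
    (hPnn : ∀ i j, 0 ≤ Pm i j) (hProw : ∀ i, ∑ j, Pm i j = 1)
    (r : ℝ) (hrdef : r = dobrushin Pm) (hr : r < 1)
    (π : Fin K → ℝ) (hπpos : ∀ i, 0 < π i) (hπsum : ∑ i, π i = 1)
    (hπstat : ∀ j, ∑ i, π i * Pm i j = π j)
    (p : ℝ) (hp : 1 ≤ p) (ε : ℝ) (hε : 0 < ε) :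
    chainProb π Pm {x : Fin n → Fin K |
        chainExp π Pm (fun x' : Fin n → Fin K => lpNorm p (fun i => empMeas x' i - π i)) + ε ≤
          lpNorm p (fun i => empMeas x i - π i)} ≤
      Real.exp (-((2 : ℝ) ^ (1 - 2 / p) * n * ε ^ 2 * (1 - r) ^ 2)) := by
  obtain ⟨m, rfl⟩ : ∃ m, n = m + 1 := ⟨n - 1, by omega⟩
  have hr0 : 0 ≤ r := hrdef ▸ dob_nonneg hK Pm
  have hdob : ∀ a b : Fin K, ∑ l, |Pm a l - Pm b l| ≤ 2 * r := by
    intro a b; rw [hrdef]; exact dob_le Pm a b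
  have hp0 : 0 < p := lt_of_lt_of_le one_pos hp
  have h1r : 0 < 1 - r := by linarith
  set N : ℝ := ((m + 1 : ℕ) : ℝ) with hN
  have hN0 : (0:ℝ) < N := by rw [hN]; exact_mod_cast Nat.succ_pos m
  set f : (Fin (m + 1) → Fin K) → ℝ := fun x => lpNorm p (fun i => empMeas x i - π i) with hf
  set c : ℝ := (2:ℝ) ^ (1/p) / N with hc
  have hc0 : 0 < c := by
    rw [hc]
    exact div_pos (Real.rpow_pos_of_pos two_pos _) hN0
  have hδ0 : 0 < c / (1 - r) := div_pos hc0 h1r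
  set t : ℝ := 4 * ε / (N * (c / (1 - r))^2) with ht
  have ht0 : 0 < t := by
    rw [ht]
    exact div_pos (by positivity) (by positivity)
  set μ : ℝ := chainExp π Pm f with hμ
  have hfbd : ∀ (x x' : Fin (m + 1) → Fin K) (j : Fin (m + 1)),
      (∀ i, i ≠ j → x i = x' i) → |f x - f x'| ≤ c := by
    intro x x' j hxx'
    have h1 := lpNorm_sub_le p hp (fun i => empMeas x i - π i) (fun i => empMeas x' i - π i)
    have h2 : (fun i => (empMeas x i - π i) - (empMeas x' i - π i))
        = fun i => empMeas x i - empMeas x' i := funext fun i => by ring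
    rw [h2] at h1
    exact h1.trans (lpNorm_emp_diff (Nat.succ_pos m) p hp x x' j hxx')
  have hw : ∀ x : Fin (m + 1) → Fin K, 0 ≤ chainMass π Pm x :=
    chainMass_nonneg π Pm (fun i => (hπpos i).le) hPnn
  have key1 : chainProb π Pm {x : Fin (m + 1) → Fin K | μ + ε ≤ f x}
      ≤ Real.exp (-(t * (μ + ε))) *
        ∑ x : Fin (m + 1) → Fin K, chainMass π Pm x * Real.exp (t * f x) := by
    unfold chainProb
    rw [Finset.mul_sum]
    apply Finset.sum_le_sum
    intro x _
    by_cases hx : x ∈ {x : Fin (m + 1) → Fin K | μ + ε ≤ f x}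
    · rw [if_pos hx]
      have hfx : μ + ε ≤ f x := hx
      calc chainMass π Pm x = chainMass π Pm x * 1 := (mul_one _).symm
        _ ≤ chainMass π Pm x * (Real.exp (-(t * (μ + ε))) * Real.exp (t * f x)) := by
            apply mul_le_mul_of_nonneg_left _ (hw x)
            rw [← Real.exp_add]
            apply Real.one_le_exp
            have : 0 ≤ t * (f x - (μ + ε)) := mul_nonneg ht0.le (by linarith)
            nlinarith
        _ = Real.exp (-(t * (μ + ε))) * (chainMass π Pm x * Real.exp (t * f x)) := by ring
    · rw [if_neg hx]
      exact mul_nonneg (Real.exp_nonneg _) (mul_nonneg (hw x) (Real.exp_nonneg _))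
  have hμeq : μ = ∑ a, π a * psi Pm m a f := by
    rw [hμ]
    exact bridge Pm m π f
  have key2 : ∑ x : Fin (m + 1) → Fin K, chainMass π Pm x * Real.exp (t * f x)
      ≤ Real.exp (t * μ + ((m:ℝ) + 1) * (t^2 * (c / (1 - r))^2 / 8)) := by
    rw [bridge Pm m π (fun z => Real.exp (t * f z))]
    have hmg := psi_mgf hPnn hProw hK hr0 hr hc0.le hdob t m f hfbd
    have hosc : ∀ y y', psi Pm m y f - psi Pm m y' f ≤ c / (1 - r) := by
      intro y y'
      exact (abs_le.1 (psi_osc hPnn hProw hK hr0 hr hc0.le hdob m f hfbd y y')).2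
    calc ∑ a, π a * psi Pm m a (fun z => Real.exp (t * f z))
        ≤ ∑ a, π a * Real.exp (t * psi Pm m a f + m * (t^2 * (c / (1 - r))^2 / 8)) :=
          Finset.sum_le_sum fun a _ => mul_le_mul_of_nonneg_left (hmg a) (hπpos a).le
      _ = Real.exp (m * (t^2 * (c / (1 - r))^2 / 8)) *
            ∑ a, π a * Real.exp (t * psi Pm m a f) := by
          rw [Finset.mul_sum]
          apply Finset.sum_congr rfl
          intro a _
          rw [Real.exp_add]
          ring
      _ ≤ Real.exp (m * (t^2 * (c / (1 - r))^2 / 8)) *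
            Real.exp (t * (∑ a, π a * psi Pm m a f) + t^2 * (c / (1 - r))^2 / 8) := by
          apply mul_le_mul_of_nonneg_left _ (Real.exp_nonneg _)
          exact hoeff_finite' hK π (fun a => psi Pm m a f) (fun i => (hπpos i).le) hπsum
            (c / (1 - r)) hosc t
      _ = Real.exp (t * μ + ((m:ℝ) + 1) * (t^2 * (c / (1 - r))^2 / 8)) := by
          rw [← Real.exp_add, ← hμeq]
          congr 1
          ring
  have key3 : -(t * (μ + ε)) + (t * μ + ((m:ℝ) + 1) * (t^2 * (c / (1 - r))^2 / 8))
      = -(2 * ε^2 / (N * (c / (1 - r))^2)) := by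
    have hNm : N = (m:ℝ) + 1 := by rw [hN]; push_cast; ring
    rw [ht, hNm]
    have hd : ((m:ℝ) + 1) * (c / (1 - r))^2 ≠ 0 := by
      have : (0:ℝ) < ((m:ℝ) + 1) * (c / (1 - r))^2 := by positivity
      exact this.ne'
    field_simp
    ring
  have key4 : 2 * ε^2 / (N * (c / (1 - r))^2)
      = (2 : ℝ) ^ (1 - 2 / p) * N * ε ^ 2 * (1 - r) ^ 2 := by
    have h2p : ((2:ℝ) ^ (1/p))^2 = 2 ^ (2/p) := by
      rw [← Real.rpow_natCast ((2:ℝ) ^ (1/p)) 2, ← Real.rpow_mul (by norm_num : (0:ℝ) ≤ 2)]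
      norm_num
      congr 1
      ring
    have h2sub : (2:ℝ) ^ (1 - 2/p) = 2 / 2 ^ (2/p) := by
      rw [Real.rpow_sub two_pos, Real.rpow_one]
    have h2pp : (0:ℝ) < (2:ℝ) ^ (2/p) := Real.rpow_pos_of_pos two_pos _
    rw [hc, h2sub]
    rw [div_pow, div_pow, h2p]
    field_simp
  calc chainProb π Pm {x : Fin (m + 1) → Fin K | μ + ε ≤ f x}
      ≤ Real.exp (-(t * (μ + ε))) *
        ∑ x : Fin (m + 1) → Fin K, chainMass π Pm x * Real.exp (t * f x) := key1
    _ ≤ Real.exp (-(t * (μ + ε))) *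
        Real.exp (t * μ + ((m:ℝ) + 1) * (t^2 * (c / (1 - r))^2 / 8)) :=
          mul_le_mul_of_nonneg_left key2 (Real.exp_nonneg _)
    _ = Real.exp (-(2 * ε^2 / (N * (c / (1 - r))^2))) := by
          rw [← Real.exp_add, key3]
    _ = Real.exp (-((2 : ℝ) ^ (1 - 2 / p) * ↑(m + 1) * ε ^ 2 * (1 - r) ^ 2)) := by
          rw [key4]
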